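/- arXiv:0804.4042 — 2 statements merged into one kernel-verified Lean document; each statement's English description precedes it below -/
import Mathlib

section
/- Let C be a binary linear code with coset leaders chosen as ⪯-minimum elements, and let T be a trial set for C. Then M^1(C) ⊆ LH(T) ⊆ E^1(C); in particular, every larger half of every nonzero codeword of C is an uncorrectable error. -/
/-- Support of a binary vector: the set of nonzero coordinates. -/
def supp {n : ℕ} (x : Fin n → ZMod 2) : Finset (Fin n) :=
  Finset.univ.filter (fun i => x i ≠ 0)

/-- Hamming weight. -/
def wt {n : ℕ} (x : Fin n → ZMod 2) : ℕ := (supp x).card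

/-- Numerical value v(x) = Σ_{i=1}^n x_i 2^(n-i) (0-based: exponent n-1-i). -/
def nval {n : ℕ} (x : Fin n → ZMod 2) : ℕ :=
  ∑ i : Fin n, (x i).val * 2 ^ (n - 1 - (i : ℕ))

/-- The total order ⪯ : first by weight, ties broken by numerical value. -/
def ple {n : ℕ} (x y : Fin n → ZMod 2) : Prop :=
  wt x < wt y ∨ (wt x = wt y ∧ nval x ≤ nval y)

/-- The strict version ≺ of ⪯. -/
def plt {n : ℕ} (x y : Fin n → ZMod 2) : Prop := ple x y ∧ x ≠ y

/-- Covering order: x ⊆ y iff S(x) ⊆ S(y). -/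
def covers {n : ℕ} (x y : Fin n → ZMod 2) : Prop := supp x ⊆ supp y

/-- v is the coset leader of its coset of C, i.e. the ⪯-minimum element
(u ranges over the coset of v: u + v ∈ C). -/
def IsCosetLeader {n : ℕ} (C : Submodule (ZMod 2) (Fin n → ZMod 2))
    (v : Fin n → ZMod 2) : Prop :=
  ∀ u, u + v ∈ C → ple v u

/-- E⁰(C): the set of correctable errors (coset leaders). -/
def E0 {n : ℕ} (C : Submodule (ZMod 2) (Fin n → ZMod 2)) : Set (Fin n → ZMod 2) :=
  {v | IsCosetLeader C v}

/-- E¹(C): the set of uncorrectable errors. -/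
def E1 {n : ℕ} (C : Submodule (ZMod 2) (Fin n → ZMod 2)) : Set (Fin n → ZMod 2) :=
  {v | ¬ IsCosetLeader C v}

/-- M¹(C): the ⊆-minimal elements of E¹(C). -/
def M1 {n : ℕ} (C : Submodule (ZMod 2) (Fin n → ZMod 2)) : Set (Fin n → ZMod 2) :=
  {v ∈ E1 C | ∀ u ∈ E1 C, covers u v → u = v}

/-- v is a larger half of c: v is ⊆-minimal among vectors u with u + c ≺ u. -/
def IsLH {n : ℕ} (c v : Fin n → ZMod 2) : Prop :=
  plt (v + c) v ∧ ∀ u, plt (u + c) u → covers u v → u = v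

/-- LH(c): the set of larger halves of c. -/
def LH {n : ℕ} (c : Fin n → ZMod 2) : Set (Fin n → ZMod 2) := {v | IsLH c v}

/-- LH(U) = ∪_{c ∈ U} LH(c). -/
def LHset {n : ℕ} (U : Set (Fin n → ZMod 2)) : Set (Fin n → ZMod 2) :=
  ⋃ c ∈ U, LH c

/-- LH⁻(c): larger halves of c of weight w(c)/2 (for even-weight c). -/
def LHm {n : ℕ} (c : Fin n → ZMod 2) : Set (Fin n → ZMod 2) :=
  {v ∈ LH c | 2 * wt v = wt c}

/-- A_i(U): elements of U of weight i. -/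
def Aw {n : ℕ} (U : Set (Fin n → ZMod 2)) (i : ℕ) : Set (Fin n → ZMod 2) :=
  {v ∈ U | wt v = i}

/-- C has minimum distance d. -/
def HasMinDist {n : ℕ} (C : Submodule (ZMod 2) (Fin n → ZMod 2)) (d : ℕ) : Prop :=
  (∃ c ∈ C, c ≠ 0 ∧ wt c = d) ∧ ∀ c ∈ C, c ≠ 0 → d ≤ wt c

/-- T is a trial set for C. -/
def IsTrialSet {n : ℕ} (C : Submodule (ZMod 2) (Fin n → ZMod 2))
    (T : Set (Fin n → ZMod 2)) : Prop :=
  T ⊆ (C : Set (Fin n → ZMod 2)) \ {0} ∧ M1 C ⊆ LHset T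

/-- l(x) = min S(x), the leftmost nonzero coordinate (⊤ if x = 0). -/
def lm {n : ℕ} (x : Fin n → ZMod 2) : WithTop (Fin n) := (supp x).min

/-- The coordinatewise "and" of two vectors: support is S(x) ∩ S(y). -/
def vand {n : ℕ} (x y : Fin n → ZMod 2) : Fin n → ZMod 2 := fun i => x i * y i



lemma zmod2_ne_zero' : ∀ a : ZMod 2, a ≠ 0 → a = 1 := by decide

lemma zmod2_ne_zero {a : ZMod 2} (h : a ≠ 0) : a = 1 := zmod2_ne_zero' a h

lemma nval_eq_sum_supp {n : ℕ} (x : Fin n → ZMod 2) :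
    nval x = ∑ j ∈ (supp x).image (fun i : Fin n => n - 1 - (i : ℕ)), 2 ^ j := by
  have hinj : ∀ a ∈ supp x, ∀ b ∈ supp x,
      (n - 1 - (a : ℕ)) = (n - 1 - (b : ℕ)) → a = b := by
    intro a _ b _ hab
    have := a.isLt; have := b.isLt
    exact Fin.ext (by omega)
  rw [Finset.sum_image hinj]
  unfold nval
  rw [← Finset.sum_filter_add_sum_filter_not Finset.univ (fun i => x i ≠ 0)]
  have h1 : ∀ i ∈ Finset.univ.filter (fun i : Fin n => ¬ x i ≠ 0),
      (x i).val * 2 ^ (n - 1 - (i : ℕ)) = 0 := by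
    intro i hi
    simp only [Finset.mem_filter, not_not] at hi
    simp [hi.2]
  rw [Finset.sum_eq_zero h1, add_zero]
  apply Finset.sum_congr rfl
  intro i hi
  simp only [supp, Finset.mem_filter] at hi
  rw [zmod2_ne_zero hi.2]
  norm_num [ZMod.val_one]

lemma nval_inj {n : ℕ} (x y : Fin n → ZMod 2) (h : nval x = nval y) : x = y := by
  rw [nval_eq_sum_supp, nval_eq_sum_supp] at h
  have him : (supp x).image (fun i : Fin n => n - 1 - (i : ℕ))
      = (supp y).image (fun i : Fin n => n - 1 - (i : ℕ)) :=
    Finset.geomSum_injective (n := 2) le_rfl h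
  have inj : ∀ (a b : Fin n), (n - 1 - (a : ℕ)) = (n - 1 - (b : ℕ)) → a = b := by
    intro a b hab
    have := a.isLt; have := b.isLt
    exact Fin.ext (by omega)
  have hsupp : supp x = supp y := by
    ext i
    constructor <;> intro hi
    · have : (n - 1 - (i : ℕ)) ∈ (supp y).image (fun i : Fin n => n - 1 - (i : ℕ)) := by
        rw [← him]; exact Finset.mem_image_of_mem _ hi
      obtain ⟨j, hj, hji⟩ := Finset.mem_image.mp this
      rwa [inj j i hji] at hj
    · have : (n - 1 - (i : ℕ)) ∈ (supp x).image (fun i : Fin n => n - 1 - (i : ℕ)) := by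
        rw [him]; exact Finset.mem_image_of_mem _ hi
      obtain ⟨j, hj, hji⟩ := Finset.mem_image.mp this
      rwa [inj j i hji] at hj
  funext i
  by_cases hx : x i = 0 <;> by_cases hy : y i = 0
  · rw [hx, hy]
  · exfalso; have : i ∈ supp y := by simp [supp, hy]
    rw [← hsupp] at this; simp [supp, hx] at this
  · exfalso; have : i ∈ supp x := by simp [supp, hx]
    rw [hsupp] at this; simp [supp, hy] at this
  · rw [zmod2_ne_zero hx, zmod2_ne_zero hy]

lemma ple_antisymm {n : ℕ} {x y : Fin n → ZMod 2} (h1 : ple x y) (h2 : ple y x) : x = y := by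
  rcases h1 with h1 | ⟨hw1, hn1⟩ <;> rcases h2 with h2 | ⟨hw2, hn2⟩
  · omega
  · omega
  · omega
  · exact nval_inj x y (le_antisymm hn1 hn2)

lemma lh_mem_E1 {n : ℕ} (C : Submodule (ZMod 2) (Fin n → ZMod 2))
    (c : Fin n → ZMod 2) (hc : c ∈ C) (v : Fin n → ZMod 2) (hv : v ∈ LH c) :
    v ∈ E1 C := by
  intro hL
  have heq : (v + c) + v = c := by
    funext i
    simp only [Pi.add_apply]
    have h2 : v i + v i = 0 := by
      have : (2 : ZMod 2) = 0 := by decide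
      calc v i + v i = 2 * v i := by ring
      _ = 0 := by rw [this, zero_mul]
    rw [add_comm (v i) (c i), add_assoc, h2, add_zero]
  have hmem : (v + c) + v ∈ C := by rw [heq]; exact hc
  have h1 : ple v (v + c) := hL _ hmem
  exact hv.1.2 (ple_antisymm hv.1.1 h1)

/-- M¹(C) ⊆ LH(T) ⊆ E¹(C); every larger half of every nonzero
codeword is an uncorrectable error. -/
theorem stmt3 {n : ℕ} (C : Submodule (ZMod 2) (Fin n → ZMod 2))
    (T : Set (Fin n → ZMod 2)) (hT : IsTrialSet C T) :
    M1 C ⊆ LHset T ∧ LHset T ⊆ E1 C ∧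
    ∀ c ∈ C, c ≠ 0 → LH c ⊆ E1 C := by
  refine ⟨hT.2, ?_, ?_⟩
  · intro v hv
    obtain ⟨c, hc, hvc⟩ := Set.mem_iUnion₂.mp hv
    exact lh_mem_E1 C c (hT.1 hc).1 v hvc
  · intro c hc _ v hv
    exact lh_mem_E1 C c hc v hv
end

section
/- (Lemma 1, part 2) Let C be a binary linear code with odd minimum distance d. For every codeword c_1 of weight d and every codeword c_2 of weight d+1 in C, the set LH(c_1) ∩ LH^-(c_2) has at most one element, where LH^-(c_2) is the set of larger halves of c_2 of weight (d+1)/2. -/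
lemma eq_of_supp_eq {n : ℕ} {x y : Fin n → ZMod 2} (h : supp x = supp y) : x = y := by
  funext i
  have hx := Finset.ext_iff.mp h i
  simp only [supp, Finset.mem_filter, Finset.mem_univ, true_and] at hx
  have : ∀ a b : ZMod 2, (a ≠ 0 ↔ b ≠ 0) → a = b := by decide
  exact this _ _ hx

lemma disj_wt {n : ℕ} {x y : Fin n → ZMod 2} (h : ∀ i, x i = 0 ∨ y i = 0) :
    wt (x + y) = wt x + wt y := by
  have hsupp : supp (x + y) = supp x ∪ supp y := by
    ext i
    simp only [supp, Finset.mem_filter, Finset.mem_univ, true_and, Finset.mem_union,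
      Pi.add_apply]
    have : ∀ a b : ZMod 2, (a = 0 ∨ b = 0) → (a + b ≠ 0 ↔ (a ≠ 0 ∨ b ≠ 0)) := by decide
    exact this _ _ (h i)
  have hdisj : Disjoint (supp x) (supp y) := by
    rw [Finset.disjoint_left]
    intro i hx hy
    simp only [supp, Finset.mem_filter, Finset.mem_univ, true_and] at hx hy
    rcases h i with h0 | h0
    · exact hx h0
    · exact hy h0
  show (supp (x + y)).card = (supp x).card + (supp y).card
  rw [hsupp, Finset.card_union_of_disjoint hdisj]

lemma disj_nval {n : ℕ} {x y : Fin n → ZMod 2} (h : ∀ i, x i = 0 ∨ y i = 0) :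
    nval (x + y) = nval x + nval y := by
  unfold nval
  rw [← Finset.sum_add_distrib]
  apply Finset.sum_congr rfl
  intro i _
  have hval : ∀ a b : ZMod 2, (a = 0 ∨ b = 0) → (a + b).val = a.val + b.val := by decide
  rw [Pi.add_apply, hval _ _ (h i), add_mul]

lemma lh_supp_subset {n : ℕ} {c v : Fin n → ZMod 2} (h : IsLH c v) :
    supp v ⊆ supp c := by
  obtain ⟨⟨hple, hne⟩, hmin⟩ := h
  have hc : c ≠ 0 := by
    intro h0
    apply hne
    rw [h0, add_zero]
  have hur : ∀ i, (vand v c + c) i = 0 ∨ (fun j => v j * (1 + c j)) i = 0 := by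
    intro i
    have : ∀ a b : ZMod 2, a * b + b = 0 ∨ a * (1 + b) = 0 := by decide
    exact this (v i) (c i)
  have hur2 : ∀ i, (vand v c) i = 0 ∨ (fun j => v j * (1 + c j)) i = 0 := by
    intro i
    have : ∀ a b : ZMod 2, a * b = 0 ∨ a * (1 + b) = 0 := by decide
    exact this (v i) (c i)
  have hv_eq : v = vand v c + (fun j => v j * (1 + c j)) := by
    funext i
    have : ∀ a b : ZMod 2, a = a * b + a * (1 + b) := by decide
    exact this (v i) (c i)
  have hvc_eq : v + c = (vand v c + c) + (fun j => v j * (1 + c j)) := by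
    conv_lhs => rw [hv_eq]
    ring
  have w1 : wt v = wt (vand v c) + wt (fun j => v j * (1 + c j)) := by
    conv_lhs => rw [hv_eq]
    exact disj_wt hur2
  have w2 : wt (v + c) = wt (vand v c + c) + wt (fun j => v j * (1 + c j)) := by
    conv_lhs => rw [hvc_eq]
    exact disj_wt hur
  have n1 : nval v = nval (vand v c) + nval (fun j => v j * (1 + c j)) := by
    conv_lhs => rw [hv_eq]
    exact disj_nval hur2
  have n2 : nval (v + c) = nval (vand v c + c) + nval (fun j => v j * (1 + c j)) := by
    conv_lhs => rw [hvc_eq]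
    exact disj_nval hur
  have hple' : ple (vand v c + c) (vand v c) := by
    rcases hple with hlt | ⟨heq, hle⟩
    · left; omega
    · right; exact ⟨by omega, by omega⟩
  have hne' : vand v c + c ≠ vand v c := by
    intro h0
    exact hc (by simpa using h0)
  have hcov : covers (vand v c) v := by
    intro i hi
    simp only [supp, Finset.mem_filter, Finset.mem_univ, true_and, vand] at hi ⊢
    intro h0
    apply (Finset.mem_filter.mp hi).2
    show v i * c i = 0
    rw [h0, zero_mul]
  have huv : vand v c = v := hmin (vand v c) ⟨hple', hne'⟩ hcov
  intro i hi
  simp only [supp, Finset.mem_filter, Finset.mem_univ, true_and] at hi ⊢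
  intro h0
  apply hi
  have hvi : v i * c i = v i := congrFun huv i
  rw [← hvi, h0, mul_zero]

/-- Lemma 1, part 2: |LH(c₁) ∩ LH⁻(c₂)| ≤ 1 for w(c₁)=d, w(c₂)=d+1,
d odd. -/
theorem stmt7 {n : ℕ} (C : Submodule (ZMod 2) (Fin n → ZMod 2)) (d : ℕ)
    (hd : HasMinDist C d) (hodd : Odd d)
    (c1 c2 : Fin n → ZMod 2) (h1 : c1 ∈ C) (h2 : c2 ∈ C)
    (hw1 : wt c1 = d) (hw2 : wt c2 = d + 1) :
    (LH c1 ∩ LHm c2).Subsingleton := by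
  have key : ∀ w ∈ LH c1 ∩ LHm c2, supp w = supp c1 ∩ supp c2 := by
    intro w hw
    obtain ⟨hwL, hwL2, hww⟩ := hw
    have hs1 := lh_supp_subset hwL
    have hs2 := lh_supp_subset hwL2
    have hsub : supp w ⊆ supp c1 ∩ supp c2 := Finset.subset_inter hs1 hs2
    have hc12 : c1 + c2 ∈ C := C.add_mem h1 h2
    have hne : c1 + c2 ≠ 0 := by
      intro h0
      have hcc : c1 = c2 := by
        funext i
        have h0i : c1 i + c2 i = 0 := congrFun h0 i
        have : ∀ a b : ZMod 2, a + b = 0 → a = b := by decide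
        exact this _ _ h0i
      rw [hcc, hw2] at hw1
      omega
    have hdle : d ≤ wt (c1 + c2) := hd.2 _ hc12 hne
    have hS : supp (c1 + c2) = (supp c1 ∪ supp c2) \ (supp c1 ∩ supp c2) := by
      ext i
      simp only [supp, Finset.mem_filter, Finset.mem_univ, true_and, Finset.mem_sdiff,
        Finset.mem_union, Finset.mem_inter, Pi.add_apply]
      have : ∀ a b : ZMod 2, (a + b ≠ 0 ↔ (a ≠ 0 ∨ b ≠ 0) ∧ ¬(a ≠ 0 ∧ b ≠ 0)) := by decide
      exact this _ _
    have h1c : (supp c1 ∪ supp c2).card + (supp c1 ∩ supp c2).card = wt c1 + wt c2 :=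
      Finset.card_union_add_card_inter _ _
    have h2c : (supp (c1 + c2)).card + (supp c1 ∩ supp c2).card = (supp c1 ∪ supp c2).card := by
      rw [hS, Finset.card_sdiff_add_card_eq_card Finset.inter_subset_union]
    have hwc : wt (c1 + c2) = (supp (c1 + c2)).card := rfl
    have hwle : wt w ≤ (supp c1 ∩ supp c2).card := Finset.card_le_card hsub
    have hge : (supp c1 ∩ supp c2).card ≤ wt w := by
      have hwwt : wt w = (supp w).card := rfl
      omega
    exact Finset.eq_of_subset_of_card_le hsub hge
  intro v hv v' hv'
  apply eq_of_supp_eq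
  rw [key v hv, key v' hv']
end
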